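/- For each field k, each n ≥ 2, and all f, g ∈ SL_n(k), there exists a polynomial map ν: k → SL_n(k) (each matrix entry a polynomial in one variable over k) with ν(0) = f and ν(1) = g. -/

import Mathlib

/-!
The matrices `P(1)`, for `P ∈ SL_n(k[X])` with `P(0) = 1`, form a subgroup of `SL_n(k)`.
It contains every transvection `1 + b E_ij`, through the path `1 + t b E_ij`, hence also every
`diag(…, a, …, a⁻¹, …)`, a product of six transvections. Over a field these generate `SL_n(k)`,
so `g f⁻¹` is reached by some `P`, and `P · f` is a polynomial path from `f` to `g`.
-/

open Polynomial

namespace Matrix.SpecialLinearGroup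

variable {ι R F : Type*} [Fintype ι] [DecidableEq ι] [CommRing R] [Field F]

lemma map_transvection {S : Type*} [CommRing S] (f : R →+* S) {i j : ι} (hij : i ≠ j) (b : R) :
    map f (transvection hij b) = transvection hij (f b) := by
  ext r s
  simp [transvection_coe, one_apply, single_apply, apply_ite f]

@[simp]
lemma map_evalRingHom_map_C (t : R) (A : SpecialLinearGroup ι R) :
    map (evalRingHom t) (map C A) = A := by
  ext
  simp

variable (ι R) in
/-- The endpoints `P(1)` of the polynomial paths `P ∈ SL_ι(R[X])` starting at `P(0) = 1`. -/
noncomputable def polyPathComponent : Subgroup (SpecialLinearGroup ι R) :=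
  (map (evalRingHom 0)).ker.map (map (evalRingHom 1))

lemma transvection_mem_polyPathComponent {i j : ι} (hij : i ≠ j) (b : R) :
    transvection hij b ∈ polyPathComponent ι R :=
  ⟨transvection hij (C b * X), by simp [map_transvection], by simp [map_transvection]⟩

lemma diag2n_eq_transvection_prod {i j : ι} (hij : i ≠ j) {a : F} (ha : a ≠ 0) :
    diag2n hij a ha = transvection hij a * transvection hij.symm (-a⁻¹) * transvection hij a *
      transvection hij (-1) * transvection hij.symm 1 * transvection hij (-1) := by
  ext r s
  simp only [diag2n_coe, diagonal_apply, coe_mul, transvection_coe, Matrix.mul_add,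
    Matrix.add_mul, mul_one, one_mul, single_mul_single_same, single_mul_single_of_ne, hij,
    hij.symm, ne_eq, not_false_eq_true, mul_neg, neg_mul, neg_neg, mul_inv_cancel₀ ha,
    inv_mul_cancel₀ ha, add_zero, add_apply, one_apply, single_apply]
  grind

lemma polyPathComponent_eq_top [Nontrivial ι] : polyPathComponent ι F = ⊤ := by
  refine eq_top_iff.2 fun M _ => diagonal_transvection_induction' (· ∈ polyPathComponent ι F) M
    (fun i j hij c hc => ?_) (fun i j hij c => transvection_mem_polyPathComponent hij c)
    (fun _ _ => mul_mem)
  rw [diag2n_eq_transvection_prod hij hc]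
  iterate 5 refine mul_mem ?_ ?_
  all_goals exact transvection_mem_polyPathComponent _ _

lemma exists_polyPath_of_mul_inv_mem {f g : SpecialLinearGroup ι R}
    (h : g * f⁻¹ ∈ polyPathComponent ι R) :
    ∃ P : SpecialLinearGroup ι R[X], map (evalRingHom 0) P = f ∧ map (evalRingHom 1) P = g := by
  obtain ⟨Q, hQ0, hQ1⟩ := h
  refine ⟨Q * map C f, ?_, ?_⟩
  · simp [MonoidHom.mem_ker.1 hQ0]
  · simp [hQ1]

end Matrix.SpecialLinearGroup

open Matrix.SpecialLinearGroup in
/-- for each field `k`, `n ≥ 2`, and `f, g ∈ SL_n(k)`, there is a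
polynomial map `ν : k → SL_n(k)` (a matrix of one-variable polynomials with
`det = 1` identically) with `ν(0) = f` and `ν(1) = g`. -/
theorem exists_polynomial_path_in_SL (k : Type*) [Field k] (n : ℕ) (hn : 2 ≤ n)
    (f g : Matrix.SpecialLinearGroup (Fin n) k) :
    ∃ P : Matrix (Fin n) (Fin n) (Polynomial k),
      P.det = 1 ∧
      (Matrix.of fun i j => (P i j).eval 0) = (f : Matrix (Fin n) (Fin n) k) ∧
      (Matrix.of fun i j => (P i j).eval 1) = (g : Matrix (Fin n) (Fin n) k) := by
  have : Nontrivial (Fin n) := Fin.nontrivial_iff_two_le.2 hn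
  obtain ⟨P, hP0, hP1⟩ := exists_polyPath_of_mul_inv_mem
    (polyPathComponent_eq_top (ι := Fin n) (F := k) ▸ Subgroup.mem_top (g * f⁻¹))
  exact ⟨P, P.prop, congrArg Subtype.val hP0, congrArg Subtype.val hP1⟩
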